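/- Let w ∈ ℝ^D with w ≠ 0 and let sgn(w) ∈ {±1}^D be defined componentwise by sgn(w)_j = 1 if w_j ≥ 0 and -1 otherwise. Then over all z of the form z = a·q with a ≥ 0 a scalar and q ∈ {±1}^D, the Euclidean distance ‖z - w‖ is minimized by a* = (Σ_j |w_j|)/D and q* = sgn(w). -/

import Mathlib

/-! For `q ∈ {±1}^D`, `‖a • q - w‖² = D a² - 2a ⟪q, w⟫ + ‖w‖²`, and `⟪q, w⟫ ≤ ∑ |w j|` with equality
at `q = sgn w`. What remains is the quadratic `D a² - 2a ∑ |w j|`, minimized at `a = ∑ |w j| / D`. -/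

open Finset

lemma sq_eq_one_of_eq_one_or_eq_neg_one {x : ℝ} (hx : x = 1 ∨ x = -1) : x ^ 2 = 1 := by
  rcases hx with rfl | rfl <;> norm_num

lemma mul_le_abs_of_eq_one_or_eq_neg_one {x y : ℝ} (hx : x = 1 ∨ x = -1) : x * y ≤ |y| := by
  rcases hx with rfl | rfl
  · simpa using le_abs_self y
  · simpa using neg_le_abs y

lemma norm_smul_sub_sq_of_sq_eq_one {ι : Type*} [Fintype ι] (a : ℝ) {q : EuclideanSpace ℝ ι} (hq : ∀ j, q j ^ 2 = 1)
    (w : EuclideanSpace ℝ ι) :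
    ‖a • q - w‖ ^ 2 = Fintype.card ι * a ^ 2 - 2 * a * ∑ j, q j * w j + ‖w‖ ^ 2 := by
  have hq_norm : ‖q‖ ^ 2 = Fintype.card ι := by
    simp [EuclideanSpace.norm_sq_eq, hq]
  have hq_inner : inner ℝ q w = ∑ j, q j * w j := by
    simp [PiLp.inner_apply, mul_comm]
  rw [norm_sub_sq_real, norm_smul, mul_pow, Real.norm_eq_abs, sq_abs, hq_norm,
    real_inner_smul_left, hq_inner]
  ring

lemma mul_sq_sub_le_mul_sq_sub {n c S : ℝ} (hn : 0 ≤ n) (hc : n * c = S) (a : ℝ) :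
    n * c ^ 2 - 2 * c * S ≤ n * a ^ 2 - 2 * a * S := by
  subst hc
  nlinarith [mul_nonneg hn (sq_nonneg (a - c))]

theorem statement7_general (D : ℕ) (w : EuclideanSpace ℝ (Fin D))
    (sgnw : EuclideanSpace ℝ (Fin D))
    (hsgn : ∀ j, sgnw j = if 0 ≤ w j then 1 else -1) :
    ∀ (a : ℝ), 0 ≤ a → ∀ q : EuclideanSpace ℝ (Fin D),
      (∀ j, q j = 1 ∨ q j = -1) →
      ‖((∑ j, |w j|) / D) • sgnw - w‖ ≤ ‖a • q - w‖ := by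
  intro a ha q hq
  set S := ∑ j, |w j|
  have hsgnw : ∀ j, sgnw j = 1 ∨ sgnw j = -1 := fun j => by
    rw [hsgn j]; split_ifs <;> simp
  have hsgnw_mul : ∀ j, sgnw j * w j = |w j| := fun j => by
    rw [hsgn j]; split_ifs with h
    · simp [abs_of_nonneg h]
    · simp [abs_of_neg (not_le.mp h)]
  -- At `D = 0` this survives `S / 0 = 0` because then `S = 0` too.
  have hDS : (D : ℝ) * (S / D) = S := by
    rcases Nat.eq_zero_or_pos D with rfl | hD
    · simp [S]
    · field_simp
  have hqw : a * ∑ j, q j * w j ≤ a * S :=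
    mul_le_mul_of_nonneg_left (sum_le_sum fun j _ => mul_le_abs_of_eq_one_or_eq_neg_one (hq j)) ha
  refine (pow_le_pow_iff_left₀ (norm_nonneg _) (norm_nonneg _) two_ne_zero).1 ?_
  rw [norm_smul_sub_sq_of_sq_eq_one _ (fun j => sq_eq_one_of_eq_one_or_eq_neg_one (hsgnw j)),
    norm_smul_sub_sq_of_sq_eq_one _ (fun j => sq_eq_one_of_eq_one_or_eq_neg_one (hq j)),
    Fintype.card_fin, sum_congr rfl fun j _ => hsgnw_mul j]
  linarith [mul_sq_sub_le_mul_sq_sub (Nat.cast_nonneg D) hDS a]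

theorem statement7 (D : ℕ) (w : EuclideanSpace ℝ (Fin D)) (hw : w ≠ 0)
    (sgnw : EuclideanSpace ℝ (Fin D))
    (hsgn : ∀ j, sgnw j = if 0 ≤ w j then 1 else -1) :
    ∀ (a : ℝ), 0 ≤ a → ∀ q : EuclideanSpace ℝ (Fin D),
      (∀ j, q j = 1 ∨ q j = -1) →
      ‖((∑ j, |w j|) / D) • sgnw - w‖ ≤ ‖a • q - w‖ :=
  statement7_general D w sgnw hsgn
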